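/- arXiv:2011.03961 — 2 statements merged into one kernel-verified Lean document; each statement's English description precedes it below -/
import Mathlib

section
/- Let ρ ∈ D_ω(ℝ^N) with supp ρ ⊆ B₁(0), and (x_j)_{j∈ℕ} ⊂ ℝ^N with |x₁| > 1 and |x_j| ≥ |x_{j−1}| + 2 for j ≥ 2. Then g(x) := Σ_{j∈ℕ} ρ(x−x_j)·exp(−j·ω(x_j)) defines a function in S_ω(ℝ^N). -/
open Real Set Filter

noncomputable section

abbrev Euc (N : ℕ) := EuclideanSpace ℝ (Fin N)

/-- single partial derivative in direction `i` -/
noncomputable def pd {N : ℕ} (i : Fin N) (f : Euc N → ℝ) : Euc N → ℝ :=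
  fun x => fderiv ℝ f x (EuclideanSpace.single i 1)

/-- iterated partial derivative `∂^α` for a multi-index `α` -/
noncomputable def pdm {N : ℕ} (α : Fin N → ℕ) (f : Euc N → ℝ) : Euc N → ℝ :=
  ((List.ofFn fun i : Fin N => (pd i)^[α i]).foldr (· ∘ ·) id) f

/-- length `|α|` of a multi-index -/
def msize {N : ℕ} (α : Fin N → ℕ) : ℕ := ∑ i, α i

/-- the Young conjugate `φ*_ω(s) = sup_{t ≥ 0} (s t - ω(e^t))` -/
noncomputable def phiStar (ω : ℝ → ℝ) (s : ℝ) : ℝ :=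
  sSup {y : ℝ | ∃ t : ℝ, 0 ≤ t ∧ y = s * t - ω (Real.exp t)}

/-- non-quasianalytic weight function in the sense of Braun-Meise-Taylor -/
structure IsWeightFun (ω : ℝ → ℝ) : Prop where
  nonneg : ∀ t, 0 ≤ t → 0 ≤ ω t
  cont : ContinuousOn ω (Ici 0)
  mono : MonotoneOn ω (Ici 0)
  alpha : ∃ K : ℝ, 1 ≤ K ∧ ∀ t, 0 ≤ t → ω (2 * t) ≤ K * (1 + ω t)
  beta : MeasureTheory.IntegrableOn (fun t => ω t / (1 + t ^ 2)) (Ici 1)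
  gamma : ∃ a : ℝ, ∃ b : ℝ, 0 < b ∧ ∀ t, 0 ≤ t → a + b * Real.log (1 + t) ≤ ω t
  delta : ConvexOn ℝ univ (fun t => ω (Real.exp t))

/-- membership in `𝒮_ω(ℝ^N)` -/
def MemS (ω : ℝ → ℝ) {N : ℕ} (f : Euc N → ℝ) : Prop :=
  ContDiff ℝ (⊤ : ℕ∞) f ∧ ∀ lam mu : ℝ, 0 < lam → 0 < mu → ∃ C : ℝ,
    ∀ (α : Fin N → ℕ) (x : Euc N),
      Real.exp (mu * ω ‖x‖) * |pdm α f x| ≤ C * Real.exp (lam * phiStar ω (msize α / lam))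

/-- membership in `ℰ_ω(ℝ^N)` -/
def MemE (ω : ℝ → ℝ) {N : ℕ} (f : Euc N → ℝ) : Prop :=
  ContDiff ℝ (⊤ : ℕ∞) f ∧ ∀ K : Set (Euc N), IsCompact K → ∀ m : ℕ, 0 < m → ∃ C : ℝ,
    ∀ (α : Fin N → ℕ), ∀ x ∈ K, |pdm α f x| ≤ C * Real.exp (m * phiStar ω (msize α / m))

/-- membership in `𝒟_ω(ℝ^N)` -/
def MemD (ω : ℝ → ℝ) {N : ℕ} (f : Euc N → ℝ) : Prop :=
  MemE ω f ∧ HasCompactSupport f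

/-- membership in `𝒪_{M,ω}(ℝ^N)`: slowly increasing functions of Beurling type -/
def MemOM (ω : ℝ → ℝ) {N : ℕ} (f : Euc N → ℝ) : Prop :=
  ContDiff ℝ (⊤ : ℕ∞) f ∧ ∀ m : ℕ, 0 < m → ∃ C : ℝ, 0 < C ∧ ∃ n : ℕ,
    ∀ (α : Fin N → ℕ) (x : Euc N),
      |pdm α f x| ≤ C * Real.exp (n * ω ‖x‖ + m * phiStar ω (msize α / m))

/-- the weighted sup norm `r_{m,n}` -/
noncomputable def rNorm (ω : ℝ → ℝ) {N : ℕ} (m : ℕ) (n : ℤ) (f : Euc N → ℝ) : ℝ :=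
  ⨆ p : (Fin N → ℕ) × Euc N,
    |pdm p.1 f p.2| * Real.exp (-(n : ℝ) * ω ‖p.2‖ - m * phiStar ω (msize p.1 / m))

/-- finiteness of the norm `r_{m,n}` -/
def rBdd (ω : ℝ → ℝ) {N : ℕ} (m : ℕ) (n : ℤ) (f : Euc N → ℝ) : Prop :=
  BddAbove (Set.range fun p : (Fin N → ℕ) × Euc N =>
    |pdm p.1 f p.2| * Real.exp (-(n : ℝ) * ω ‖p.2‖ - m * phiStar ω (msize p.1 / m)))

/-- membership in `𝒪^m_{n,ω}(ℝ^N)` -/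
def MemOmn (ω : ℝ → ℝ) {N : ℕ} (m : ℕ) (n : ℤ) (f : Euc N → ℝ) : Prop :=
  ContDiff ℝ (⊤ : ℕ∞) f ∧ rBdd ω m n f

/-- the norm `q_{λ,μ}` of `𝒮_ω(ℝ^N)` -/
noncomputable def qNorm (ω : ℝ → ℝ) {N : ℕ} (lam mu : ℝ) (f : Euc N → ℝ) : ℝ :=
  ⨆ p : (Fin N → ℕ) × Euc N,
    Real.exp (-(lam * phiStar ω (msize p.1 / lam)) + mu * ω ‖p.2‖) * |pdm p.1 f p.2|

/-- finiteness of the norm `q_{m,g}` -/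
def qgBdd (ω : ℝ → ℝ) {N : ℕ} (m : ℕ) (g f : Euc N → ℝ) : Prop :=
  BddAbove (Set.range fun p : (Fin N → ℕ) × Euc N =>
    |g p.2| * |pdm p.1 f p.2| * Real.exp (-(m : ℝ) * phiStar ω (msize p.1 / m)))

end

section Aux
open Topology

lemma pd_contDiff {N : ℕ} (i : Fin N) {f : Euc N → ℝ} (hf : ContDiff ℝ (⊤ : ℕ∞) f) :
    ContDiff ℝ (⊤ : ℕ∞) (pd i f) := by
  have h : ContDiff ℝ (⊤ : ℕ∞) (fderiv ℝ f) := hf.fderiv_right (by simp)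
  exact ((ContinuousLinearMap.apply ℝ ℝ (EuclideanSpace.single i (1:ℝ))).contDiff).comp h

lemma pd_eventuallyEq {N : ℕ} (i : Fin N) {f g : Euc N → ℝ} {y : Euc N}
    (h : f =ᶠ[nhds y] g) : pd i f =ᶠ[nhds y] pd i g := by
  have h2 : ∀ᶠ z in 𝓝 y, f =ᶠ[𝓝 z] g := eventually_eventually_nhds.mpr h
  exact h2.mono fun z hz => by simp [pd, hz.fderiv_eq]

lemma pd_transmul {N : ℕ} (i : Fin N) {f : Euc N → ℝ} (hf : ContDiff ℝ (⊤ : ℕ∞) f)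
    (v : Euc N) (c : ℝ) :
    pd i (fun z => f (z - v) * c) = fun z => pd i f (z - v) * c := by
  funext z
  have hd : HasFDerivAt f (fderiv ℝ f (z - v)) (z - v) :=
    (hf.differentiable (by simp) (z - v)).hasFDerivAt
  have ht : HasFDerivAt (fun w : Euc N => w - v) (ContinuousLinearMap.id ℝ (Euc N)) z := by
    simpa using (hasFDerivAt_id z).sub_const v
  have hc := (hd.comp z ht).mul_const c
  have hc' : HasFDerivAt (fun z : Euc N => f (z - v) * c)
      (c • ((fderiv ℝ f (z - v)).comp (ContinuousLinearMap.id ℝ (Euc N)))) z := hc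
  simp only [pd, hc'.fderiv]
  simp [mul_comm]


def GoodOp {N : ℕ} (T : (Euc N → ℝ) → (Euc N → ℝ)) : Prop :=
  (∀ f, ContDiff ℝ (⊤ : ℕ∞) f → ContDiff ℝ (⊤ : ℕ∞) (T f)) ∧
  (∀ f g : Euc N → ℝ, ∀ y : Euc N, f =ᶠ[nhds y] g → T f =ᶠ[nhds y] T g) ∧
  (∀ f, ContDiff ℝ (⊤ : ℕ∞) f → ∀ v c, T (fun z => f (z - v) * c) = fun z => (T f) (z - v) * c)

lemma goodOp_id {N : ℕ} : GoodOp (N := N) id :=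
  ⟨fun _ h => h, fun _ _ _ h => h, fun _ _ _ _ => rfl⟩

lemma goodOp_pd {N : ℕ} (i : Fin N) : GoodOp (pd i) :=
  ⟨fun _ h => pd_contDiff i h, fun _ _ _ h => pd_eventuallyEq i h,
   fun _ h v c => pd_transmul i h v c⟩

lemma goodOp_comp {N : ℕ} {T₁ T₂ : (Euc N → ℝ) → (Euc N → ℝ)}
    (h₁ : GoodOp T₁) (h₂ : GoodOp T₂) : GoodOp (T₁ ∘ T₂) := by
  refine ⟨fun f hf => h₁.1 _ (h₂.1 _ hf), fun f g y h => h₁.2.1 _ _ _ (h₂.2.1 _ _ _ h),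
    fun f hf v c => ?_⟩
  show T₁ (T₂ (fun z => f (z - v) * c)) = _
  rw [h₂.2.2 f hf v c, h₁.2.2 _ (h₂.1 _ hf) v c]
  rfl

lemma goodOp_iterate {N : ℕ} {T : (Euc N → ℝ) → (Euc N → ℝ)} (h : GoodOp T) (n : ℕ) :
    GoodOp T^[n] := by
  induction n with
  | zero => exact goodOp_id
  | succ n ih => rw [Function.iterate_succ]; exact goodOp_comp ih h

lemma goodOp_foldr {N : ℕ} (L : List ((Euc N → ℝ) → (Euc N → ℝ)))
    (h : ∀ T ∈ L, GoodOp T) : GoodOp (L.foldr (· ∘ ·) id) := by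
  induction L with
  | nil => exact goodOp_id
  | cons a l ih =>
      rw [List.foldr_cons]
      exact goodOp_comp (h a List.mem_cons_self) (ih fun T hT => h T (List.mem_cons_of_mem a hT))

lemma goodOp_pdm {N : ℕ} (α : Fin N → ℕ) : GoodOp (fun f : Euc N → ℝ => pdm α f) := by
  have : GoodOp ((List.ofFn fun i : Fin N => (pd i)^[α i]).foldr (· ∘ ·) id) := by
    apply goodOp_foldr
    intro T hT
    rw [List.mem_ofFn] at hT
    obtain ⟨i, rfl⟩ := hT
    exact goodOp_iterate (goodOp_pd i) (α i)
  exact this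

lemma pdm_zero {N : ℕ} (α : Fin N → ℕ) : pdm α (fun _ : Euc N => (0:ℝ)) = fun _ => 0 := by
  have h := (goodOp_pdm α).2.2 (fun _ : Euc N => (0:ℝ)) contDiff_const 0 0
  simpa using h

lemma pdm_eq_zero_of_not_mem_tsupport {N : ℕ} (α : Fin N → ℕ) {f : Euc N → ℝ} {z : Euc N}
    (hz : z ∉ tsupport f) : pdm α f z = 0 := by
  have hev : f =ᶠ[𝓝 z] (fun _ => 0) :=
    eventuallyEq_of_mem ((isClosed_tsupport f).isOpen_compl.mem_nhds hz)
      (fun w hw => image_eq_zero_of_notMem_tsupport hw)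
  have h2 : pdm α f z = pdm α (fun _ => 0) z :=
    ((goodOp_pdm α).2.1 f (fun _ => 0) z hev).eq_of_nhds
  rw [h2, pdm_zero]


def phiSet (ω : ℝ → ℝ) (s : ℝ) : Set ℝ := {y : ℝ | ∃ t : ℝ, 0 ≤ t ∧ y = s * t - ω (Real.exp t)}

lemma phiStar_eq (ω : ℝ → ℝ) (s : ℝ) : phiStar ω s = sSup (phiSet ω s) := rfl

lemma zero_mem_phiSet {ω : ℝ → ℝ} (h1 : ω 1 = 0) (s : ℝ) : (0:ℝ) ∈ phiSet ω s :=
  ⟨0, le_refl 0, by simp [h1]⟩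

lemma phiSet_mono_unbdd {ω : ℝ → ℝ} {s s' : ℝ} (hss : s ≤ s')
    (h : ¬ BddAbove (phiSet ω s)) : ¬ BddAbove (phiSet ω s') := by
  intro ⟨M, hM⟩
  apply h
  refine ⟨M, fun y hy => ?_⟩
  obtain ⟨t, ht, rfl⟩ := hy
  have : s' * t - ω (Real.exp t) ∈ phiSet ω s' := ⟨t, ht, rfl⟩
  have h2 := hM this
  nlinarith [mul_le_mul_of_nonneg_right hss ht]

lemma phi_compare {ω : ℝ → ℝ} (hnn : ∀ t, 0 ≤ t → 0 ≤ ω t) (h1 : ω 1 = 0)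
    {lam : ℝ} (hlam : 0 < lam) (m : ℕ) (hm : lam ≤ m) :
    ∃ B : ℝ, 0 ≤ B ∧ ∀ s : ℕ,
      (m:ℝ) * phiStar ω (s/m) ≤ lam * phiStar ω (s/lam) + B := by
  classical
  have hm0 : (0:ℝ) < m := lt_of_lt_of_le hlam hm
  have homega : ∀ t : ℝ, 0 ≤ t → 0 ≤ ω (Real.exp t) := fun t ht =>
    hnn _ (Real.exp_pos t).le
  -- claim A
  have claimA : ∀ s : ℝ, 0 ≤ s → BddAbove (phiSet ω (s/lam)) →
      (m:ℝ) * phiStar ω (s/m) ≤ lam * phiStar ω (s/lam) := by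
    intro s hs hbdd
    have hsup0 : 0 ≤ sSup (phiSet ω (s/lam)) := le_csSup hbdd (zero_mem_phiSet h1 _)
    have key : ∀ y ∈ phiSet ω (s/m), y ≤ lam * sSup (phiSet ω (s/lam)) / m := by
      intro y hy
      obtain ⟨t, ht, rfl⟩ := hy
      have hmem : (s/lam) * t - ω (Real.exp t) ∈ phiSet ω (s/lam) := ⟨t, ht, rfl⟩
      have hle : (s/lam) * t - ω (Real.exp t) ≤ sSup (phiSet ω (s/lam)) := le_csSup hbdd hmem
      have hw := homega t ht
      set u := ω (Real.exp t) with hu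
      set S := sSup (phiSet ω (s/lam)) with hS
      have h2 : s * t - lam * u ≤ lam * S := by
        have h := mul_le_mul_of_nonneg_left hle hlam.le
        calc s * t - lam * u = lam * (s/lam * t - u) := by field_simp
          _ ≤ lam * S := h
      have h3 : s * t - (m:ℝ) * u ≤ lam * S := by
        nlinarith [mul_le_mul_of_nonneg_right hm hw]
      calc s/(m:ℝ) * t - u = (s * t - (m:ℝ) * u)/(m:ℝ) := by field_simp
        _ ≤ lam * S / (m:ℝ) := by gcongr
    have : sSup (phiSet ω (s/m)) ≤ lam * sSup (phiSet ω (s/lam)) / m :=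
      csSup_le ⟨0, zero_mem_phiSet h1 _⟩ key
    rw [phiStar_eq, phiStar_eq]
    calc (m:ℝ) * sSup (phiSet ω (s/m)) ≤ (m:ℝ) * (lam * sSup (phiSet ω (s/lam)) / m) :=
          mul_le_mul_of_nonneg_left this hm0.le
      _ = lam * sSup (phiSet ω (s/lam)) := by field_simp
  by_cases hbad : ∃ s : ℕ, ¬ BddAbove (phiSet ω ((s:ℝ)/lam))
  · set s₀ := Nat.find hbad with hs₀def
    have hs₀ : ¬ BddAbove (phiSet ω ((s₀:ℝ)/lam)) := Nat.find_spec hbad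
    set M₀ : ℕ := Nat.ceil (((m:ℝ) * s₀)/lam) with hM₀def
    have hne : (Finset.range (M₀+1)).Nonempty := ⟨0, by simp⟩
    set B₀ : ℝ := (Finset.range (M₀+1)).sup' hne (fun n => (m:ℝ) * phiStar ω (n/m)) with hB₀
    refine ⟨max 0 B₀, le_max_left _ _, fun s => ?_⟩
    by_cases hb : BddAbove (phiSet ω ((s:ℝ)/lam))
    · have := claimA s (Nat.cast_nonneg s) hb
      have h0 : (0:ℝ) ≤ max 0 B₀ := le_max_left _ _
      linarith
    · have hz : lam * phiStar ω ((s:ℝ)/lam) = 0 := by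
        rw [phiStar_eq, Real.sSup_of_not_bddAbove hb, mul_zero]
      rw [hz, zero_add]
      by_cases hbm : BddAbove (phiSet ω ((s:ℝ)/m))
      · -- s is bounded: s < M₀ + 1
        have hslt : (s:ℝ)/m < (s₀:ℝ)/lam := by
          by_contra hge
          push_neg at hge
          exact (phiSet_mono_unbdd hge hs₀) hbm
        have : (s:ℝ) < (m:ℝ) * s₀ / lam := by
          rw [div_lt_div_iff₀ hm0 hlam] at hslt
          rw [lt_div_iff₀ hlam]
          linarith
        have hsM : s < M₀ + 1 := by
          have h2 : (s:ℝ) ≤ M₀ := le_trans this.le (Nat.le_ceil _)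
          exact_mod_cast lt_of_le_of_lt (Nat.cast_le.mp h2) (Nat.lt_succ_self _)
        have hle : (m:ℝ) * phiStar ω (s/m) ≤ B₀ := by
          rw [hB₀]
          exact Finset.le_sup' (f := fun n : ℕ => (m:ℝ) * phiStar ω (n/m)) (Finset.mem_range.mpr hsM)
        exact le_trans hle (le_max_right _ _)
      · have : (m:ℝ) * phiStar ω ((s:ℝ)/m) = 0 := by
          rw [phiStar_eq, Real.sSup_of_not_bddAbove hbm, mul_zero]
        rw [this]
        exact le_max_left _ _
  · push_neg at hbad
    exact ⟨0, le_refl 0, fun s => by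
      have := claimA s (Nat.cast_nonneg s) (hbad s)
      linarith⟩

end Aux

theorem bump_series_mem_S {N : ℕ} (ω : ℝ → ℝ) (hω : IsWeightFun ω)
    (hvan : ∀ t ∈ Set.Icc (0:ℝ) 1, ω t = 0)
    (ρ : Euc N → ℝ) (hρ : MemD ω ρ)
    (hsupp : tsupport ρ ⊆ Metric.ball (0 : Euc N) 1)
    (x : ℕ → Euc N) (hx0 : 1 < ‖x 0‖)
    (hxs : ∀ j : ℕ, ‖x j‖ + 2 ≤ ‖x (j + 1)‖) :
    MemS ω (fun y : Euc N =>
      ∑' j : ℕ, ρ (y - x j) * Real.exp (-((j : ℝ) + 1) * ω ‖x j‖)) := by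
  classical
  set c : ℕ → ℝ := fun j => Real.exp (-((j : ℝ) + 1) * ω ‖x j‖) with hcdef
  set f : Euc N → ℝ := fun y => ∑' j : ℕ, ρ (y - x j) * c j with hfdef
  have hρsmooth : ContDiff ℝ (⊤ : ℕ∞) ρ := hρ.1.1
  -- norms of the sequence
  have hx1 : ∀ j, 1 ≤ ‖x j‖ := by
    intro j
    induction j with
    | zero => exact hx0.le
    | succ n ih => have := hxs n; linarith
  have hxd : ∀ j k, j < k → ‖x j‖ + 2 ≤ ‖x k‖ := by
    have key : ∀ d j : ℕ, ‖x j‖ + 2 ≤ ‖x (j + d + 1)‖ := by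
      intro d
      induction d with
      | zero => intro j; simpa using hxs j
      | succ n ih =>
          intro j
          have h1 := ih j
          have h2 := hxs (j + n + 1)
          have : j + (n+1) + 1 = (j + n + 1) + 1 := by omega
          rw [this]; linarith
    intro j k hjk
    obtain ⟨d, rfl⟩ := Nat.exists_eq_add_of_lt hjk
    exact key d j
  have hsep : ∀ j k : ℕ, j ≠ k → 2 ≤ ‖x j - x k‖ := by
    have base : ∀ j k : ℕ, j < k → 2 ≤ ‖x j - x k‖ := by
      intro j k hjk
      have h1 := hxd j k hjk
      have h2 := abs_norm_sub_norm_le (x k) (x j)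
      have h3 : ‖x k‖ - ‖x j‖ ≤ |‖x k‖ - ‖x j‖| := le_abs_self _
      rw [norm_sub_rev]
      linarith
    intro j k hjk
    rcases lt_or_gt_of_ne hjk with h | h
    · exact base j k h
    · rw [norm_sub_rev]; exact base k j h
  -- radius of the support
  obtain ⟨r, hr0, hr1, hrK⟩ : ∃ r : ℝ, 0 ≤ r ∧ r < 1 ∧ ∀ z ∈ tsupport ρ, ‖z‖ ≤ r := by
    by_cases hKe : (tsupport ρ).Nonempty
    · obtain ⟨z₀, hz₀, hmax⟩ := hρ.2.exists_isMaxOn hKe continuous_norm.continuousOn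
      refine ⟨‖z₀‖, norm_nonneg _, ?_, fun z hz => hmax hz⟩
      have := hsupp hz₀
      rwa [Metric.mem_ball, dist_zero_right] at this
    · exact ⟨0, le_refl 0, one_pos, fun z hz => absurd ⟨z, hz⟩ hKe⟩
  set ε : ℝ := (1 - r) / 2 with hεdef
  have hε : 0 < ε := by rw [hεdef]; linarith
  -- local structure
  have hloc : ∀ y : Euc N,
      (∃ j : ℕ, Set.EqOn f (fun z => ρ (z - x j) * c j) (Metric.ball y ε)) ∨
      Set.EqOn f (fun _ => (0:ℝ)) (Metric.ball y ε) := by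
    intro y
    by_cases hy : ∃ j : ℕ, ∃ z, z ∈ Metric.ball y ε ∧ z - x j ∈ tsupport ρ
    · obtain ⟨j, z₁, hz₁, hz₁s⟩ := hy
      left
      refine ⟨j, fun z hz => ?_⟩
      have hvanish : ∀ k : ℕ, k ≠ j → ρ (z - x k) * c k = 0 := by
        intro k hk
        have hρz : ρ (z - x k) = 0 := by
          by_contra hne
          have hmem : z - x k ∈ tsupport ρ := subset_tsupport _ hne
          have h1 : ‖z - x k‖ ≤ r := hrK _ hmem
          have h2 : ‖z₁ - x j‖ ≤ r := hrK _ hz₁s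
          have h3 : ‖z₁ - z‖ < 2 * ε := by
            have e1 : dist z₁ y < ε := Metric.mem_ball.mp hz₁
            have e2 : dist z y < ε := Metric.mem_ball.mp hz
            calc ‖z₁ - z‖ = dist z₁ z := (dist_eq_norm _ _).symm
              _ ≤ dist z₁ y + dist y z := dist_triangle _ _ _
              _ < 2 * ε := by rw [dist_comm y z]; linarith
          have h4 : 2 ≤ ‖x k - x j‖ := hsep k j hk
          have h5 : ‖x k - x j‖ ≤ ‖z - x k‖ + ‖z₁ - z‖ + ‖z₁ - x j‖ := by
            have t1 : ‖x k - x j‖ ≤ ‖x k - z₁‖ + ‖z₁ - x j‖ := by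
              simpa using norm_sub_le_norm_sub_add_norm_sub (x k) z₁ (x j)
            have t2 : ‖x k - z₁‖ ≤ ‖x k - z‖ + ‖z - z₁‖ := by
              simpa using norm_sub_le_norm_sub_add_norm_sub (x k) z z₁
            have t3 : ‖x k - z‖ = ‖z - x k‖ := norm_sub_rev _ _
            have t4 : ‖z - z₁‖ = ‖z₁ - z‖ := norm_sub_rev _ _
            linarith
          rw [hεdef] at h3
          linarith
        simp [hρz]
      show (∑' k : ℕ, ρ (z - x k) * c k) = ρ (z - x j) * c j
      exact tsum_eq_single j hvanish
    · right
      intro z hz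
      push_neg at hy
      have hall : ∀ k : ℕ, ρ (z - x k) * c k = 0 := by
        intro k
        have : ρ (z - x k) = 0 := image_eq_zero_of_notMem_tsupport (hy k z hz)
        simp [this]
      show (∑' k : ℕ, ρ (z - x k) * c k) = 0
      calc (∑' k : ℕ, ρ (z - x k) * c k) = ∑' k : ℕ, (0:ℝ) := tsum_congr hall
        _ = 0 := tsum_zero
  -- smoothness of the single bumps
  have hgsmooth : ∀ j : ℕ, ContDiff ℝ (⊤ : ℕ∞) (fun z : Euc N => ρ (z - x j) * c j) := by
    intro j
    exact (hρsmooth.comp ((contDiff_id).sub contDiff_const)).mul contDiff_const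
  constructor
  · -- smoothness
    rw [contDiff_iff_contDiffAt]
    intro y
    rcases hloc y with ⟨j, hEq⟩ | hEq
    · exact ((hgsmooth j).contDiffAt).congr_of_eventuallyEq
        (eventuallyEq_of_mem (Metric.ball_mem_nhds y hε) hEq)
    · exact (contDiff_const.contDiffAt).congr_of_eventuallyEq
        (eventuallyEq_of_mem (Metric.ball_mem_nhds y hε) hEq)
  · -- estimates
    intro lam mu hlam hmu
    -- choose integer m ≥ lam
    set m : ℕ := max 1 (Nat.ceil lam) with hmdef
    have hmpos : 0 < m := lt_of_lt_of_le one_pos (le_max_left _ _)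
    have hmlam : lam ≤ (m : ℝ) := by
      calc lam ≤ (Nat.ceil lam : ℝ) := Nat.le_ceil lam
        _ ≤ (m : ℝ) := Nat.cast_le.mpr (le_max_right _ _)
    -- derivative bounds for ρ
    obtain ⟨C₁, hC₁⟩ := hρ.1.2 (tsupport ρ) hρ.2 m hmpos
    set C₁' : ℝ := max C₁ 0 with hC₁'def
    have hC₁'0 : 0 ≤ C₁' := le_max_right _ _
    have hC₁' : ∀ (α : Fin N → ℕ) (z : Euc N),
        |pdm α ρ z| ≤ C₁' * Real.exp ((m:ℝ) * phiStar ω (msize α / m)) := by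
      intro α z
      by_cases hz : z ∈ tsupport ρ
      · calc |pdm α ρ z| ≤ C₁ * Real.exp ((m:ℝ) * phiStar ω (msize α / m)) := hC₁ α z hz
          _ ≤ C₁' * Real.exp ((m:ℝ) * phiStar ω (msize α / m)) := by
              have := Real.exp_pos ((m:ℝ) * phiStar ω (msize α / m))
              nlinarith [le_max_left C₁ (0:ℝ)]
      · rw [pdm_eq_zero_of_not_mem_tsupport α hz]
        simp only [abs_zero]
        positivity
    -- phiStar comparison
    obtain ⟨B, hB0, hB⟩ := phi_compare hω.nonneg (hvan 1 ⟨zero_le_one, le_refl 1⟩) hlam m hmlam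
    -- weight comparison
    obtain ⟨K, hK1, hKa⟩ := hω.alpha
    have hKpos : 0 < mu * K := mul_pos hmu (lt_of_lt_of_le one_pos hK1)
    set Emax : ℝ := (Finset.range (Nat.ceil (mu*K) + 1)).sup' ⟨0, by simp⟩
        (fun j => mu * K * ω ‖x j‖) with hEmaxdef
    set E : ℝ := max 0 Emax with hEdef
    have hE0 : 0 ≤ E := le_max_left _ _
    have claimW : ∀ (j : ℕ) (y : Euc N), ‖y - x j‖ ≤ 1 →
        mu * ω ‖y‖ + (-((j:ℝ) + 1) * ω ‖x j‖) ≤ mu * K + E := by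
      intro j y hy1
      have hxj1 : 1 ≤ ‖x j‖ := hx1 j
      have hyx : ‖y‖ ≤ ‖x j‖ + 1 := by
        have h1 := le_abs_self (‖y‖ - ‖x j‖)
        have h2 := abs_norm_sub_norm_le y (x j)
        linarith
      have h2x : ‖y‖ ≤ 2 * ‖x j‖ := by linarith
      have hw1 : ω ‖y‖ ≤ ω (2 * ‖x j‖) :=
        hω.mono (mem_Ici.mpr (norm_nonneg y)) (mem_Ici.mpr (by linarith)) h2x
      have hw2 : ω (2 * ‖x j‖) ≤ K * (1 + ω ‖x j‖) := hKa _ (norm_nonneg _)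
      have hwn : 0 ≤ ω ‖x j‖ := hω.nonneg _ (norm_nonneg _)
      have hmu' : mu * ω ‖y‖ ≤ mu * K + mu * K * ω ‖x j‖ := by
        have := mul_le_mul_of_nonneg_left (hw1.trans hw2) hmu.le
        nlinarith
      by_cases hj : j < Nat.ceil (mu*K) + 1
      · have hEb : mu * K * ω ‖x j‖ ≤ Emax :=
          Finset.le_sup' (f := fun j : ℕ => mu * K * ω ‖x j‖) (Finset.mem_range.mpr hj)
        have hEb' : Emax ≤ E := le_max_right _ _
        have hj1 : (0:ℝ) ≤ ((j:ℝ) + 1) * ω ‖x j‖ := by positivity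
        linarith
      · push_neg at hj
        have hcl : mu * K ≤ (j:ℝ) + 1 := by
          have h1 : mu * K ≤ (Nat.ceil (mu*K) : ℝ) := Nat.le_ceil _
          have h2 : (Nat.ceil (mu*K) : ℝ) ≤ (j:ℝ) := by
            have : Nat.ceil (mu*K) ≤ j := by omega
            exact_mod_cast this
          linarith
        have h3 : mu * K * ω ‖x j‖ ≤ ((j:ℝ) + 1) * ω ‖x j‖ :=
          mul_le_mul_of_nonneg_right hcl hwn
        linarith
    -- the constant
    refine ⟨Real.exp (mu * K + E) * C₁' * Real.exp B, fun α y => ?_⟩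
    have hCpos : 0 ≤ Real.exp (mu * K + E) * C₁' * Real.exp B := by positivity
    have hφle : Real.exp ((m:ℝ) * phiStar ω (msize α / m)) ≤
        Real.exp B * Real.exp (lam * phiStar ω (msize α / lam)) := by
      rw [← Real.exp_add]
      exact Real.exp_le_exp.mpr (by have := hB (msize α); linarith)
    rcases hloc y with ⟨j, hEq⟩ | hEq
    · have hev : f =ᶠ[nhds y] (fun z => ρ (z - x j) * c j) :=
        eventuallyEq_of_mem (Metric.ball_mem_nhds y hε) hEq
      have hpdm1 : pdm α f y = pdm α (fun z => ρ (z - x j) * c j) y :=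
        ((goodOp_pdm α).2.1 f _ y hev).eq_of_nhds
      have hpdm2 : pdm α (fun z => ρ (z - x j) * c j) y = pdm α ρ (y - x j) * c j := by
        have h := (goodOp_pdm α).2.2 ρ hρsmooth (x j) (c j)
        exact congrFun h y
      rw [hpdm1, hpdm2]
      by_cases hys : y - x j ∈ tsupport ρ
      · have hynorm : ‖y - x j‖ ≤ 1 := le_trans (hrK _ hys) hr1.le
        have hcj : |c j| = c j := abs_of_pos (Real.exp_pos _)
        have step1 : Real.exp (mu * ω ‖y‖) * c j ≤ Real.exp (mu * K + E) := by
          rw [hcdef]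
          rw [← Real.exp_add]
          exact Real.exp_le_exp.mpr (claimW j y hynorm)
        calc Real.exp (mu * ω ‖y‖) * |pdm α ρ (y - x j) * c j|
            = (Real.exp (mu * ω ‖y‖) * c j) * |pdm α ρ (y - x j)| := by
              rw [abs_mul, hcj]; ring
          _ ≤ Real.exp (mu * K + E) * (C₁' * Real.exp ((m:ℝ) * phiStar ω (msize α / m))) := by
              apply mul_le_mul step1 (hC₁' α _) (abs_nonneg _) (Real.exp_pos _).le
          _ ≤ Real.exp (mu * K + E) * (C₁' * (Real.exp B *
                Real.exp (lam * phiStar ω (msize α / lam)))) := by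
              apply mul_le_mul_of_nonneg_left _ (Real.exp_pos _).le
              exact mul_le_mul_of_nonneg_left hφle hC₁'0
          _ = Real.exp (mu * K + E) * C₁' * Real.exp B *
                Real.exp (lam * phiStar ω (msize α / lam)) := by ring
      · rw [pdm_eq_zero_of_not_mem_tsupport α hys]
        simp only [zero_mul, abs_zero, mul_zero]
        positivity
    · have hev : f =ᶠ[nhds y] (fun _ => (0:ℝ)) :=
        eventuallyEq_of_mem (Metric.ball_mem_nhds y hε) hEq
      have hpdm1 : pdm α f y = pdm α (fun _ => (0:ℝ)) y :=
        ((goodOp_pdm α).2.1 f _ y hev).eq_of_nhds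
      rw [hpdm1, pdm_zero]
      simp only [abs_zero, mul_zero]
      positivity
end

section
/- A smooth function f ∈ C^∞(ℝ^N) belongs to O_{M,ω}(ℝ^N) if and only if f ∈ E_ω(ℝ^N) and for each m ∈ ℕ there exist C, R > 0 and n ∈ ℕ such that |∂^α f(x)| ≤ C·exp(n·ω(x) + m·φ*_ω(|α|/m)) for every α ∈ ℕ₀^N and every x ∈ ℝ^N with |x| ≥ R. -/
open Real Set Filter

theorem memOM_iff_outer_bound {N : ℕ} (ω : ℝ → ℝ) (hω : IsWeightFun ω)
    (hvan : ∀ t ∈ Set.Icc (0:ℝ) 1, ω t = 0)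
    (f : Euc N → ℝ) (hf : ContDiff ℝ (⊤ : ℕ∞) f) :
    MemOM ω f ↔
      (MemE ω f ∧ ∀ m : ℕ, 0 < m → ∃ C : ℝ, 0 < C ∧ ∃ R : ℝ, 0 < R ∧ ∃ n : ℕ,
        ∀ (α : Fin N → ℕ) (x : Euc N), R ≤ ‖x‖ →
          |pdm α f x| ≤ C * Real.exp ((n : ℝ) * ω ‖x‖ + (m : ℝ) * phiStar ω ((msize α : ℝ) / m))) := by
  constructor
  · rintro ⟨_, h⟩
    refine ⟨⟨hf, ?_⟩, ?_⟩
    · intro K hK m hm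
      obtain ⟨C, hC, n, hb⟩ := h m hm
      obtain ⟨M, hM⟩ := hK.isBounded.subset_closedBall 0
      refine ⟨C * Real.exp (n * ω (max M 0)), fun α x hx => ?_⟩
      have hx' : ‖x‖ ≤ max M 0 := by
        have := hM hx
        simp only [Metric.mem_closedBall, dist_zero_right] at this
        exact le_trans this (le_max_left _ _)
      have h1 : ω ‖x‖ ≤ ω (max M 0) :=
        hω.mono (mem_Ici.2 (norm_nonneg x)) (mem_Ici.2 (le_max_right M 0)) hx'
      calc |pdm α f x| ≤ C * Real.exp ((n : ℝ) * ω ‖x‖ + m * phiStar ω (msize α / m)) :=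
            hb α x
        _ = C * Real.exp ((n : ℝ) * ω ‖x‖) * Real.exp ((m : ℝ) * phiStar ω (msize α / m)) := by
            rw [Real.exp_add]; ring
        _ ≤ C * Real.exp ((n : ℝ) * ω (max M 0)) * Real.exp ((m : ℝ) * phiStar ω (msize α / m)) := by
            have : Real.exp ((n : ℝ) * ω ‖x‖) ≤ Real.exp ((n : ℝ) * ω (max M 0)) :=
              Real.exp_le_exp.2 (mul_le_mul_of_nonneg_left h1 (Nat.cast_nonneg n))
            exact mul_le_mul_of_nonneg_right
              (mul_le_mul_of_nonneg_left this hC.le) (Real.exp_pos _).le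
    · intro m hm
      obtain ⟨C, hC, n, hb⟩ := h m hm
      exact ⟨C, hC, 1, one_pos, n, fun α x _ => hb α x⟩
  · rintro ⟨⟨_, hE⟩, hout⟩
    refine ⟨hf, fun m hm => ?_⟩
    obtain ⟨C, hC, R, hR, n, hb⟩ := hout m hm
    obtain ⟨CK, hbK⟩ := hE (Metric.closedBall 0 R) (isCompact_closedBall 0 R) m hm
    refine ⟨max C CK, lt_of_lt_of_le hC (le_max_left _ _), n, fun α x => ?_⟩
    by_cases hx : R ≤ ‖x‖
    · refine le_trans (hb α x hx) ?_
      exact mul_le_mul_of_nonneg_right (le_max_left _ _) (Real.exp_pos _).le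
    · have hxK : x ∈ Metric.closedBall 0 R := by
        simp only [Metric.mem_closedBall, dist_zero_right]
        linarith [not_le.1 hx]
      have hnω : (0:ℝ) ≤ (n : ℝ) * ω ‖x‖ :=
        mul_nonneg (Nat.cast_nonneg n) (hω.nonneg _ (norm_nonneg x))
      calc |pdm α f x| ≤ CK * Real.exp ((m : ℝ) * phiStar ω (msize α / m)) := hbK α x hxK
        _ ≤ max C CK * Real.exp ((m : ℝ) * phiStar ω (msize α / m)) :=
            mul_le_mul_of_nonneg_right (le_max_right _ _) (Real.exp_pos _).le
        _ ≤ max C CK * Real.exp ((n : ℝ) * ω ‖x‖ + (m : ℝ) * phiStar ω (msize α / m)) := by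
            have hpos : (0:ℝ) < max C CK := lt_of_lt_of_le hC (le_max_left _ _)
            exact mul_le_mul_of_nonneg_left
              (Real.exp_le_exp.2 (by linarith)) hpos.le
end
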